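/- arXiv:1206.7086 — 8 statements merged into one kernel-verified Lean document; each statement's English description precedes it below -/
import Mathlib

section
/- Let (γ, T, N, B, κ, τ) be a framed curve in ℝ³ parametrized by arclength, defined on an interval containing 0, whose torsion is a nonzero constant τ. Then γ'(s) = (1/τ)·(B(s) × B'(s)) for all s, and consequently γ(s) = γ(0) + (1/τ)·∫₀ˢ B(σ) × B'(σ) dσ, where × denotes the cross product in ℝ³. -/
/-!
Since `B = T × N` and `B' = -τ N`, the vector triple product expansion gives
`B × B' = -τ (T × N) × N = τ (⟪N, N⟫ T - ⟪T, N⟫ N) = τ T = τ γ'`.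
Integrating `γ' = T`, which is continuous because it is differentiable, gives the integral formula.
-/

open scoped RealInnerProductSpace

/-- The cross product of two vectors in Euclidean 3-space. -/
noncomputable def cross3 (u v : EuclideanSpace ℝ (Fin 3)) : EuclideanSpace ℝ (Fin 3) :=
  WithLp.toLp 2 ![u 1 * v 2 - u 2 * v 1, u 2 * v 0 - u 0 * v 2, u 0 * v 1 - u 1 * v 0]

/-- A framed curve in ℝ³, parametrized by arclength, on the parameter set `I`:
the maps `T`, `N`, `B` form a positively oriented orthonormal frame at each `s ∈ I`,
`κ` and `τ` are continuous on `I`, and the Frenet equations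
`γ' = T`, `T' = κ·N`, `N' = −κ·T + τ·B`, `B' = −τ·N` hold on `I`. -/
structure FramedCurveOn (γ T N B : ℝ → EuclideanSpace ℝ (Fin 3)) (κ τ : ℝ → ℝ)
    (I : Set ℝ) : Prop where
  contκ : ContinuousOn κ I
  contτ : ContinuousOn τ I
  unitT : ∀ s ∈ I, ‖T s‖ = 1
  unitN : ∀ s ∈ I, ‖N s‖ = 1
  unitB : ∀ s ∈ I, ‖B s‖ = 1
  orthoTN : ∀ s ∈ I, ⟪T s, N s⟫ = (0 : ℝ)
  orthoTB : ∀ s ∈ I, ⟪T s, B s⟫ = (0 : ℝ)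
  orthoNB : ∀ s ∈ I, ⟪N s, B s⟫ = (0 : ℝ)
  oriented : ∀ s ∈ I, B s = cross3 (T s) (N s)
  derivγ : ∀ s ∈ I, HasDerivWithinAt γ (T s) I s
  derivT : ∀ s ∈ I, HasDerivWithinAt T (κ s • N s) I s
  derivN : ∀ s ∈ I, HasDerivWithinAt N ((-κ s) • T s + τ s • B s) I s
  derivB : ∀ s ∈ I, HasDerivWithinAt B ((-τ s) • N s) I s

/-- A closed framed curve in ℝ³ of period `L`: a framed curve defined on all of ℝ,
all of whose data is `L`-periodic. -/
structure ClosedFramedCurve (γ T N B : ℝ → EuclideanSpace ℝ (Fin 3)) (κ τ : ℝ → ℝ)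
    (L : ℝ) : Prop where
  framed : FramedCurveOn γ T N B κ τ Set.univ
  periodicγ : Function.Periodic γ L
  periodicT : Function.Periodic T L
  periodicN : Function.Periodic N L
  periodicB : Function.Periodic B L
  periodicκ : Function.Periodic κ L
  periodicτ : Function.Periodic τ L

open Matrix

lemma cross3_eq_crossProduct (u v : EuclideanSpace ℝ (Fin 3)) :
    cross3 u v = WithLp.toLp 2 (u.ofLp ⨯₃ v.ofLp) := rfl

lemma cross3_smul_right (u v : EuclideanSpace ℝ (Fin 3)) (c : ℝ) :
    cross3 u (c • v) = c • cross3 u v := by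
  simp only [cross3_eq_crossProduct, WithLp.ofLp_smul, map_smul, WithLp.toLp_smul]

lemma cross3_cross3_eq_smul_sub_smul (u v w : EuclideanSpace ℝ (Fin 3)) :
    cross3 (cross3 u v) w = ⟪u, w⟫ • v - ⟪v, w⟫ • u := by
  simp only [cross3_eq_crossProduct, cross_cross_eq_smul_sub_smul,
    EuclideanSpace.inner_eq_star_dotProduct, star_trivial, dotProduct_comm (w.ofLp)]
  rfl

namespace FramedCurveOn

variable {γ T N B : ℝ → EuclideanSpace ℝ (Fin 3)} {κ τ : ℝ → ℝ} {I : Set ℝ}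

lemma cross3_binormal_deriv (h : FramedCurveOn γ T N B κ τ I) (hI : IsOpen I) {s : ℝ}
    (hs : s ∈ I) : cross3 (B s) (deriv B s) = τ s • T s := by
  have hN : ⟪N s, N s⟫ = (1 : ℝ) := by
    rw [real_inner_self_eq_norm_sq, h.unitN s hs, one_pow]
  rw [((h.derivB s hs).hasDerivAt (hI.mem_nhds hs)).deriv, cross3_smul_right, h.oriented s hs,
    cross3_cross3_eq_smul_sub_smul, h.orthoTN s hs, hN, zero_smul, one_smul, zero_sub, smul_neg,
    neg_smul, neg_neg]

lemma integral_tangent_eq_sub (h : FramedCurveOn γ T N B κ τ I) (hI : IsOpen I)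
    (hIint : I.OrdConnected) {a b : ℝ} (ha : a ∈ I) (hb : b ∈ I) :
    ∫ σ in a..b, T σ = γ b - γ a := by
  have hsub : Set.uIcc a b ⊆ I := hIint.uIcc_subset ha hb
  have hcontT : ContinuousOn T I := fun s hs => (h.derivT s hs).continuousWithinAt
  exact intervalIntegral.integral_eq_sub_of_hasDerivAt
    (fun σ hσ => (h.derivγ σ (hsub hσ)).hasDerivAt (hI.mem_nhds (hsub hσ)))
    ((hcontT.mono hsub).intervalIntegrable)

end FramedCurveOn

/-- Koenigs/Darboux integral representation: for a framed curve of nonzero constant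
torsion `τ₀` on an (open) interval containing `0`, one has `γ' = (1/τ₀)·(B × B')` and
hence `γ(s) = γ(0) + (1/τ₀)·∫₀ˢ B × B'`. -/
theorem darboux_representation (γ T N B : ℝ → EuclideanSpace ℝ (Fin 3))
    (κ τ : ℝ → ℝ) (I : Set ℝ) (hIopen : IsOpen I) (hIint : I.OrdConnected)
    (h0 : (0 : ℝ) ∈ I) (h : FramedCurveOn γ T N B κ τ I)
    (τ₀ : ℝ) (hτ₀ : τ₀ ≠ 0) (hτ : ∀ s ∈ I, τ s = τ₀) :
    (∀ s ∈ I, deriv γ s = (1 / τ₀) • cross3 (B s) (deriv B s)) ∧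
      (∀ s ∈ I, γ s = γ 0 + (1 / τ₀) • ∫ σ in (0 : ℝ)..s, cross3 (B σ) (deriv B σ)) := by
  have htangent : ∀ s ∈ I, (1 / τ₀) • cross3 (B s) (deriv B s) = T s := fun s hs => by
    rw [h.cross3_binormal_deriv hIopen hs, hτ s hs, smul_smul, one_div_mul_cancel hτ₀, one_smul]
  refine ⟨fun s hs => ?_, fun s hs => ?_⟩
  · rw [htangent s hs]
    exact ((h.derivγ s hs).hasDerivAt (hIopen.mem_nhds hs)).deriv
  · have hsub : Set.uIcc 0 s ⊆ I := hIint.uIcc_subset h0 hs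
    rw [← intervalIntegral.integral_smul,
      intervalIntegral.integral_congr fun σ hσ => htangent σ (hsub hσ),
      h.integral_tangent_eq_sub hIopen hIint h0 hs, add_sub_cancel]
end

section
/- Let (γ, T, N, B, κ, τ) be a framed curve in ℝ³ parametrized by arclength with κ of class C² and τ of class C¹, such that κ(s) ≠ 0 and τ(s) ≠ 0 for all s. If γ lies on a sphere, i.e., there exist c ∈ ℝ³ and r > 0 with ‖γ(s) − c‖ = r for all s, then the curvature and torsion satisfy the differential equation τ(s)/κ(s) − d/ds( κ'(s) / (κ(s)²·τ(s)) ) = 0 for all s. -/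
open scoped RealInnerProductSpace

/-!
Let `p = γ - c`. Differentiating `⟪p, p⟫ = r²` and using the Frenet equations gives, one
derivative at a time, the components of `p` in the moving frame:
`⟪p, T⟫ = 0`, then `⟪p, N⟫ = -1/κ`, then `⟪p, B⟫ = κ'/(κ²τ)`. One more derivative of the last
identity gives `(κ'/(κ²τ))' = -τ⟪p, N⟫ = τ/κ`.
-/

theorem HasDerivAt.inner_add_inner_eq {E : Type*} [NormedAddCommGroup E]
    [InnerProductSpace ℝ E] {f g : ℝ → E} {φ : ℝ → ℝ} {f' g' : E} {φ' s : ℝ}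
    (hf : HasDerivAt f f' s) (hg : HasDerivAt g g' s) (hφ : HasDerivAt φ φ' s)
    (hfg : ∀ u, ⟪f u, g u⟫ = φ u) : ⟪f s, g'⟫ + ⟪f', g s⟫ = φ' :=
  (hf.inner ℝ hg).unique (funext hfg ▸ hφ)

namespace FramedCurveOn

variable {γ T N B : ℝ → EuclideanSpace ℝ (Fin 3)} {κ τ : ℝ → ℝ}
  {c : EuclideanSpace ℝ (Fin 3)} {r : ℝ}

theorem hasDerivAt_sub_center (h : FramedCurveOn γ T N B κ τ Set.univ) (s : ℝ) :
    HasDerivAt (fun u => γ u - c) (T s) s :=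
  (hasDerivWithinAt_univ.mp (h.derivγ s trivial)).sub_const c

theorem inner_sub_center_tangent (h : FramedCurveOn γ T N B κ τ Set.univ)
    (hsphere : ∀ s, ‖γ s - c‖ = r) (s : ℝ) : ⟪γ s - c, T s⟫ = 0 := by
  have := (h.hasDerivAt_sub_center s).inner_add_inner_eq (h.hasDerivAt_sub_center s)
    (hasDerivAt_const s (r ^ 2)) fun u => by rw [real_inner_self_eq_norm_sq, hsphere u]
  linarith [real_inner_comm (T s) (γ s - c)]

theorem curvature_mul_inner_sub_center_normal (h : FramedCurveOn γ T N B κ τ Set.univ)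
    (hsphere : ∀ s, ‖γ s - c‖ = r) (s : ℝ) : κ s * ⟪γ s - c, N s⟫ = -1 := by
  have := (h.hasDerivAt_sub_center s).inner_add_inner_eq
    (hasDerivWithinAt_univ.mp (h.derivT s trivial)) (hasDerivAt_const s 0)
    (h.inner_sub_center_tangent hsphere)
  rw [real_inner_smul_right, real_inner_self_eq_norm_sq, h.unitT s trivial] at this
  linarith

theorem curvature_ne_zero (h : FramedCurveOn γ T N B κ τ Set.univ)
    (hsphere : ∀ s, ‖γ s - c‖ = r) (s : ℝ) : κ s ≠ 0 :=
  left_ne_zero_of_mul (by rw [h.curvature_mul_inner_sub_center_normal hsphere s]; norm_num)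

theorem inner_sub_center_normal (h : FramedCurveOn γ T N B κ τ Set.univ)
    (hsphere : ∀ s, ‖γ s - c‖ = r) (s : ℝ) : ⟪γ s - c, N s⟫ = -(κ s)⁻¹ := by
  rw [inv_eq_of_mul_eq_one_right (b := -⟪γ s - c, N s⟫)
    (by rw [mul_neg, h.curvature_mul_inner_sub_center_normal hsphere s, neg_neg]), neg_neg]

theorem torsion_mul_inner_sub_center_binormal (h : FramedCurveOn γ T N B κ τ Set.univ)
    (hsphere : ∀ s, ‖γ s - c‖ = r) (hκ : Differentiable ℝ κ) (s : ℝ) :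
    τ s * ⟪γ s - c, B s⟫ = deriv κ s / κ s ^ 2 := by
  have hκs := h.curvature_ne_zero hsphere s
  have hinv : HasDerivAt (fun u => -(κ u)⁻¹) (deriv κ s / κ s ^ 2) s :=
    ((hκ s).hasDerivAt.inv hκs).neg.congr_deriv (by ring)
  have := (h.hasDerivAt_sub_center s).inner_add_inner_eq
    (hasDerivWithinAt_univ.mp (h.derivN s trivial)) hinv (h.inner_sub_center_normal hsphere)
  rw [inner_add_right, real_inner_smul_right, real_inner_smul_right,
    h.inner_sub_center_tangent hsphere, h.orthoTN s trivial] at this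
  linarith

theorem inner_sub_center_binormal (h : FramedCurveOn γ T N B κ τ Set.univ)
    (hsphere : ∀ s, ‖γ s - c‖ = r) (hκ : Differentiable ℝ κ) {s : ℝ} (hτ : τ s ≠ 0) :
    ⟪γ s - c, B s⟫ = deriv κ s / (κ s ^ 2 * τ s) := by
  rw [← div_div, ← h.torsion_mul_inner_sub_center_binormal hsphere hκ s,
    mul_div_cancel_left₀ _ hτ]

theorem hasDerivAt_inner_sub_center_binormal (h : FramedCurveOn γ T N B κ τ Set.univ)
    (hsphere : ∀ s, ‖γ s - c‖ = r) (s : ℝ) :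
    HasDerivAt (fun u => ⟪γ u - c, B u⟫) (τ s / κ s) s := by
  have := (h.hasDerivAt_sub_center (c := c) s).inner ℝ (hasDerivWithinAt_univ.mp (h.derivB s trivial))
  rwa [real_inner_smul_right, h.inner_sub_center_normal hsphere, h.orthoTB s trivial,
    add_zero, neg_mul_neg, ← div_eq_mul_inv] at this

end FramedCurveOn

theorem spherical_curve_kappa_tau_ode_general (γ T N B : ℝ → EuclideanSpace ℝ (Fin 3))
    (κ τ : ℝ → ℝ) (h : FramedCurveOn γ T N B κ τ Set.univ)
    (hκC2 : ContDiff ℝ 2 κ)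
    (hτ0 : ∀ s, τ s ≠ 0)
    (c : EuclideanSpace ℝ (Fin 3)) (r : ℝ)
    (hsphere : ∀ s, ‖γ s - c‖ = r) :
    ∀ s, τ s / κ s - deriv (fun u => deriv κ u / (κ u ^ 2 * τ u)) s = 0 := by
  intro s
  have hκ : Differentiable ℝ κ := hκC2.differentiable (by norm_num)
  have hbinormal : (fun u => deriv κ u / (κ u ^ 2 * τ u)) = fun u => ⟪γ u - c, B u⟫ :=
    funext fun u => (h.inner_sub_center_binormal hsphere hκ (hτ0 u)).symm
  rw [hbinormal, (h.hasDerivAt_inner_sub_center_binormal hsphere s).deriv, sub_self]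

/-- A spherical framed curve with nonvanishing curvature of class C² and nonvanishing
torsion of class C¹ satisfies the classical ODE `τ/κ − (κ'/(κ²·τ))' = 0`. -/
theorem spherical_curve_kappa_tau_ode (γ T N B : ℝ → EuclideanSpace ℝ (Fin 3))
    (κ τ : ℝ → ℝ) (h : FramedCurveOn γ T N B κ τ Set.univ)
    (hκC2 : ContDiff ℝ 2 κ) (hτC1 : ContDiff ℝ 1 τ)
    (hκ0 : ∀ s, κ s ≠ 0) (hτ0 : ∀ s, τ s ≠ 0)
    (c : EuclideanSpace ℝ (Fin 3)) (r : ℝ) (hr : 0 < r)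
    (hsphere : ∀ s, ‖γ s - c‖ = r) :
    ∀ s, τ s / κ s - deriv (fun u => deriv κ u / (κ u ^ 2 * τ u)) s = 0 :=
  spherical_curve_kappa_tau_ode_general γ T N B κ τ h hκC2 hτ0 c r hsphere
end

section
/- Let (γ, T, N, B, κ, τ) be a framed curve in ℝ³ parametrized by arclength, defined on an interval containing 0, of class C⁴, with κ(s) ≠ 0 for all s, and let r > 0. Then γ lies on a sphere of radius r (i.e., there exists c ∈ ℝ³ with ‖γ(s) − c‖ = r for all s) if and only if there exist constants A, B ∈ ℝ with A² + B² = r² such that ( A·cos(∫₀ˢ τ(σ) dσ) + B·sin(∫₀ˢ τ(σ) dσ) )·κ(s) = 1 for all s. -/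
open scoped RealInnerProductSpace

/-!
Rotating the normal plane `(N, B)` by the total torsion `θ = ∫ τ` gives normal fields
`Q = cos θ • N - sin θ • B` and `R = sin θ • N + cos θ • B` whose derivatives
`-κ cos θ • T` and `-κ sin θ • T` are tangent (a parallel, or Bishop, frame).

If `‖γ - c‖ = r`, then `γ - c ⊥ T`, so the components `⟪γ - c, Q⟫ = -A₀` and
`⟪γ - c, R⟫ = -B₀` are constant with `A₀² + B₀² = ‖γ - c‖² = r²`, and differentiating `⟪γ - c, T⟫ = 0` gives
`κ ⟪γ - c, N⟫ = -1`, which is `(A₀ cos θ + B₀ sin θ) κ = 1` since `N = cos θ • Q + sin θ • R`.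
Conversely, that identity makes `γ + A₀ • Q + B₀ • R` have derivative
`(1 - (A₀ cos θ + B₀ sin θ) κ) • T = 0`; this constant point is the centre, at distance
`‖A₀ • Q + B₀ • R‖ = √(A₀² + B₀²)` from `γ`.
-/

open Real

section Calculus

variable {E : Type*} [NormedAddCommGroup E] [NormedSpace ℝ E]

theorem Convex.eq_of_hasDerivWithinAt_zero {f : ℝ → E} {I : Set ℝ} (hI : Convex ℝ I)
    (hf : ∀ s ∈ I, HasDerivWithinAt f 0 I s) {x y : ℝ} (hx : x ∈ I) (hy : y ∈ I) :
    f x = f y := by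
  have h := hI.norm_image_sub_le_of_norm_hasDerivWithin_le (C := 0) hf
    (fun s _ => norm_zero.le) hy hx
  rw [zero_mul, norm_le_zero_iff, sub_eq_zero] at h
  exact h

theorem HasDerivAt.eq_zero_of_eventuallyEq_const {f : ℝ → E} {f' c : E} {s : ℝ}
    (hf : HasDerivAt f f' s) (hc : f =ᶠ[nhds s] fun _ => c) : f' = 0 :=
  hf.unique ((hasDerivAt_const s c).congr_of_eventuallyEq hc)

theorem ContinuousOn.hasDerivAt_intervalIntegral [CompleteSpace E] {f : ℝ → E} {I : Set ℝ}
    (hf : ContinuousOn f I) (hIo : IsOpen I) (hIc : I.OrdConnected) {a b : ℝ} (ha : a ∈ I)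
    (hb : b ∈ I) : HasDerivAt (fun u => ∫ x in a..u, f x) (f b) b :=
  intervalIntegral.integral_hasDerivAt_right
    ((hf.mono (hIc.uIcc_subset ha hb)).intervalIntegrable)
    (hf.stronglyMeasurableAtFilter hIo b hb) (hf.continuousAt (hIo.mem_nhds hb))

end Calculus

section InnerProduct

variable {E : Type*} [NormedAddCommGroup E] [InnerProductSpace ℝ E]

theorem inner_eq_zero_of_hasDerivAt_of_norm_eventuallyEq {f : ℝ → E} {f' : E} {s r : ℝ}
    (hf : HasDerivAt f f' s) (hr : ∀ᶠ t in nhds s, ‖f t‖ = r) : ⟪f s, f'⟫ = 0 := by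
  have h := (hf.inner ℝ hf).eq_zero_of_eventuallyEq_const (c := r ^ 2)
    (hr.mono fun t ht => by simp only [real_inner_self_eq_norm_sq, ht])
  rw [real_inner_comm (f s) f'] at h
  linarith

theorem Orthonormal.sum_inner_sq_eq_norm_sq [FiniteDimensional ℝ E] {ι : Type*} [Fintype ι]
    {v : ι → E} (hv : Orthonormal ℝ v) (hcard : Fintype.card ι = Module.finrank ℝ E) (x : E) :
    ∑ i, ⟪x, v i⟫ ^ 2 = ‖x‖ ^ 2 := by
  have hsp := (hv.linearIndependent.span_eq_top_of_card_eq_finrank' hcard).ge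
  simpa only [OrthonormalBasis.coe_mk] using (OrthonormalBasis.mk hv hsp).sum_sq_inner_left x

end InnerProduct

section RotatedFrame

variable {E : Type*} [NormedAddCommGroup E] [InnerProductSpace ℝ E]

noncomputable def rotatedNormal (θ : ℝ → ℝ) (N B : ℝ → E) (s : ℝ) : E :=
  cos (θ s) • N s - sin (θ s) • B s

noncomputable def rotatedBinormal (θ : ℝ → ℝ) (N B : ℝ → E) (s : ℝ) : E :=
  sin (θ s) • N s + cos (θ s) • B s

variable {θ κ τ : ℝ → ℝ} {T N B : ℝ → E} {I : Set ℝ} {s : ℝ}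

theorem hasDerivWithinAt_rotatedNormal (hθ : HasDerivWithinAt θ (τ s) I s)
    (hN : HasDerivWithinAt N ((-κ s) • T s + τ s • B s) I s)
    (hB : HasDerivWithinAt B ((-τ s) • N s) I s) :
    HasDerivWithinAt (rotatedNormal θ N B) (-(κ s * cos (θ s)) • T s) I s :=
  ((hθ.cos.smul hN).sub (hθ.sin.smul hB)).congr_deriv (by module)

theorem hasDerivWithinAt_rotatedBinormal (hθ : HasDerivWithinAt θ (τ s) I s)
    (hN : HasDerivWithinAt N ((-κ s) • T s + τ s • B s) I s)
    (hB : HasDerivWithinAt B ((-τ s) • N s) I s) :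
    HasDerivWithinAt (rotatedBinormal θ N B) (-(κ s * sin (θ s)) • T s) I s :=
  ((hθ.sin.smul hN).add (hθ.cos.smul hB)).congr_deriv (by module)

theorem cos_smul_rotatedNormal_add_sin_smul_rotatedBinormal :
    cos (θ s) • rotatedNormal θ N B s + sin (θ s) • rotatedBinormal θ N B s = N s := by
  unfold rotatedNormal rotatedBinormal
  linear_combination (norm := module) cos_sq_add_sin_sq (θ s) • N s

theorem inner_rotatedNormal_eq_zero {x : E} (hN : ⟪x, N s⟫ = 0) (hB : ⟪x, B s⟫ = 0) :
    ⟪x, rotatedNormal θ N B s⟫ = 0 := by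
  simp [rotatedNormal, inner_sub_right, real_inner_smul_right, hN, hB]

theorem inner_rotatedBinormal_eq_zero {x : E} (hN : ⟪x, N s⟫ = 0) (hB : ⟪x, B s⟫ = 0) :
    ⟪x, rotatedBinormal θ N B s⟫ = 0 := by
  simp [rotatedBinormal, inner_add_right, real_inner_smul_right, hN, hB]

theorem inner_rotatedNormal_sq_add_inner_rotatedBinormal_sq (x : E) :
    ⟪x, rotatedNormal θ N B s⟫ ^ 2 + ⟪x, rotatedBinormal θ N B s⟫ ^ 2 =
      ⟪x, N s⟫ ^ 2 + ⟪x, B s⟫ ^ 2 := by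
  simp only [rotatedNormal, rotatedBinormal, inner_sub_right, inner_add_right,
    real_inner_smul_right]
  linear_combination (⟪x, N s⟫ ^ 2 + ⟪x, B s⟫ ^ 2) * cos_sq_add_sin_sq (θ s)

theorem norm_smul_rotatedNormal_add_smul_rotatedBinormal_sq (a b : ℝ) (hN : ‖N s‖ = 1)
    (hB : ‖B s‖ = 1) (hNB : ⟪N s, B s⟫ = 0) :
    ‖a • rotatedNormal θ N B s + b • rotatedBinormal θ N B s‖ ^ 2 = a ^ 2 + b ^ 2 := by
  have hcomb : a • rotatedNormal θ N B s + b • rotatedBinormal θ N B s =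
      (a * cos (θ s) + b * sin (θ s)) • N s + (b * cos (θ s) - a * sin (θ s)) • B s := by
    unfold rotatedNormal rotatedBinormal
    module
  rw [hcomb, norm_add_sq_real, real_inner_smul_left, real_inner_smul_right, hNB, norm_smul,
    norm_smul, hN, hB, mul_one, mul_one, Real.norm_eq_abs, Real.norm_eq_abs, sq_abs, sq_abs]
  linear_combination (a ^ 2 + b ^ 2) * cos_sq_add_sin_sq (θ s)

end RotatedFrame

namespace FramedCurveOn

variable {γ T N B : ℝ → EuclideanSpace ℝ (Fin 3)} {κ τ θ : ℝ → ℝ} {I : Set ℝ}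

theorem orthonormal_frame (h : FramedCurveOn γ T N B κ τ I) {s : ℝ} (hs : s ∈ I) :
    Orthonormal ℝ ![T s, N s, B s] := by
  rw [orthonormal_iff_ite]
  intro i j
  fin_cases i <;> fin_cases j <;>
    simp [real_inner_comm (T s) (N s), real_inner_comm (T s) (B s),
      real_inner_comm (N s) (B s), h.unitT s hs, h.unitN s hs, h.unitB s hs, h.orthoTN s hs,
      h.orthoTB s hs, h.orthoNB s hs]

theorem norm_sq_eq_inner_frame_sq (h : FramedCurveOn γ T N B κ τ I) {s : ℝ} (hs : s ∈ I)
    (x : EuclideanSpace ℝ (Fin 3)) :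
    ‖x‖ ^ 2 = ⟪x, T s⟫ ^ 2 + ⟪x, N s⟫ ^ 2 + ⟪x, B s⟫ ^ 2 := by
  rw [← (h.orthonormal_frame hs).sum_inner_sq_eq_norm_sq (by simp), Fin.sum_univ_three]
  rfl

theorem inner_sub_tangent_eq_zero (h : FramedCurveOn γ T N B κ τ I) (hIo : IsOpen I)
    {c : EuclideanSpace ℝ (Fin 3)} {r : ℝ} (hc : ∀ s ∈ I, ‖γ s - c‖ = r) {s : ℝ} (hs : s ∈ I) :
    ⟪γ s - c, T s⟫ = 0 :=
  inner_eq_zero_of_hasDerivAt_of_norm_eventuallyEq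
    (((h.derivγ s hs).sub_const c).hasDerivAt (hIo.mem_nhds hs))
    (Filter.eventually_of_mem (hIo.mem_nhds hs) hc)

theorem curvature_mul_inner_sub_normal_eq_neg_one (h : FramedCurveOn γ T N B κ τ I)
    (hIo : IsOpen I) {c : EuclideanSpace ℝ (Fin 3)} {r : ℝ} (hc : ∀ s ∈ I, ‖γ s - c‖ = r)
    {s : ℝ} (hs : s ∈ I) : κ s * ⟪γ s - c, N s⟫ = -1 := by
  have hderiv := (((h.derivγ s hs).sub_const c).inner ℝ (h.derivT s hs)).hasDerivAt
    (hIo.mem_nhds hs)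
  have h0 := hderiv.eq_zero_of_eventuallyEq_const (c := 0)
    (Filter.eventually_of_mem (hIo.mem_nhds hs) fun t ht => h.inner_sub_tangent_eq_zero hIo hc ht)
  rw [real_inner_smul_right, real_inner_self_eq_norm_sq, h.unitT s hs] at h0
  linarith

theorem inner_sub_eq_of_hasDerivWithinAt_smul_tangent (h : FramedCurveOn γ T N B κ τ I)
    (hIc : Convex ℝ I) {c : EuclideanSpace ℝ (Fin 3)} (hT : ∀ s ∈ I, ⟪γ s - c, T s⟫ = 0)
    {V : ℝ → EuclideanSpace ℝ (Fin 3)} {μ : ℝ → ℝ}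
    (hV : ∀ s ∈ I, HasDerivWithinAt V (μ s • T s) I s) (hVT : ∀ s ∈ I, ⟪T s, V s⟫ = 0)
    {s t : ℝ} (hs : s ∈ I) (ht : t ∈ I) : ⟪γ s - c, V s⟫ = ⟪γ t - c, V t⟫ :=
  hIc.eq_of_hasDerivWithinAt_zero (fun u hu =>
    (((h.derivγ u hu).sub_const c).inner ℝ (hV u hu)).congr_deriv
      (by rw [real_inner_smul_right, hT u hu, hVT u hu, mul_zero, zero_add])) hs ht

theorem exists_sq_add_sq_eq_of_norm_sub_eq (h : FramedCurveOn γ T N B κ τ I) (hIo : IsOpen I)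
    (hIc : Convex ℝ I) (hne : I.Nonempty) (hθ : ∀ s ∈ I, HasDerivWithinAt θ (τ s) I s)
    {c : EuclideanSpace ℝ (Fin 3)} {r : ℝ} (hc : ∀ s ∈ I, ‖γ s - c‖ = r) :
    ∃ A₀ B₀ : ℝ, A₀ ^ 2 + B₀ ^ 2 = r ^ 2 ∧
      ∀ s ∈ I, (A₀ * cos (θ s) + B₀ * sin (θ s)) * κ s = 1 := by
  obtain ⟨a, ha⟩ := hne
  have hT : ∀ s ∈ I, ⟪γ s - c, T s⟫ = 0 := fun s hs => h.inner_sub_tangent_eq_zero hIo hc hs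
  have hQ : ∀ s ∈ I, ⟪γ s - c, rotatedNormal θ N B s⟫ = ⟪γ a - c, rotatedNormal θ N B a⟫ :=
    fun s hs => h.inner_sub_eq_of_hasDerivWithinAt_smul_tangent hIc hT
      (fun u hu => hasDerivWithinAt_rotatedNormal (hθ u hu) (h.derivN u hu) (h.derivB u hu))
      (fun u hu => inner_rotatedNormal_eq_zero (h.orthoTN u hu) (h.orthoTB u hu)) hs ha
  have hR : ∀ s ∈ I, ⟪γ s - c, rotatedBinormal θ N B s⟫ = ⟪γ a - c, rotatedBinormal θ N B a⟫ :=
    fun s hs => h.inner_sub_eq_of_hasDerivWithinAt_smul_tangent hIc hT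
      (fun u hu => hasDerivWithinAt_rotatedBinormal (hθ u hu) (h.derivN u hu) (h.derivB u hu))
      (fun u hu => inner_rotatedBinormal_eq_zero (h.orthoTN u hu) (h.orthoTB u hu)) hs ha
  refine ⟨-⟪γ a - c, rotatedNormal θ N B a⟫, -⟪γ a - c, rotatedBinormal θ N B a⟫, ?_, ?_⟩
  · rw [neg_sq, neg_sq, inner_rotatedNormal_sq_add_inner_rotatedBinormal_sq, ← hc a ha,
      h.norm_sq_eq_inner_frame_sq ha, hT a ha]
    ring
  · intro s hs
    have hN : ⟪γ s - c, N s⟫ =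
        cos (θ s) * ⟪γ s - c, rotatedNormal θ N B s⟫ +
          sin (θ s) * ⟪γ s - c, rotatedBinormal θ N B s⟫ := by
      rw [← cos_smul_rotatedNormal_add_sin_smul_rotatedBinormal (θ := θ) (N := N) (B := B),
        inner_add_right, real_inner_smul_right, real_inner_smul_right]
    rw [← hQ s hs, ← hR s hs]
    linear_combination (-1 : ℝ) * h.curvature_mul_inner_sub_normal_eq_neg_one hIo hc hs +
      κ s * hN

theorem exists_norm_sub_eq_of_sq_add_sq_eq (h : FramedCurveOn γ T N B κ τ I)
    (hIc : Convex ℝ I) (hne : I.Nonempty) (hθ : ∀ s ∈ I, HasDerivWithinAt θ (τ s) I s)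
    {A₀ B₀ r : ℝ} (hr : 0 ≤ r) (hAB : A₀ ^ 2 + B₀ ^ 2 = r ^ 2)
    (hκ : ∀ s ∈ I, (A₀ * cos (θ s) + B₀ * sin (θ s)) * κ s = 1) :
    ∃ c : EuclideanSpace ℝ (Fin 3), ∀ s ∈ I, ‖γ s - c‖ = r := by
  obtain ⟨a, ha⟩ := hne
  set center : ℝ → EuclideanSpace ℝ (Fin 3) :=
    fun s => γ s + (A₀ • rotatedNormal θ N B s + B₀ • rotatedBinormal θ N B s)
  have hcenter : ∀ s ∈ I, center s = center a := fun s hs =>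
    hIc.eq_of_hasDerivWithinAt_zero (fun u hu =>
      ((h.derivγ u hu).add
        (((hasDerivWithinAt_rotatedNormal (hθ u hu) (h.derivN u hu) (h.derivB u hu)).const_smul
            A₀).add
          ((hasDerivWithinAt_rotatedBinormal (hθ u hu) (h.derivN u hu) (h.derivB u hu)).const_smul
            B₀))).congr_deriv
        (by linear_combination (norm := module) -(hκ u hu • T u))) hs ha
  refine ⟨center a, fun s hs => ?_⟩
  rw [← hcenter s hs, sub_add_cancel_left, norm_neg, ← sq_eq_sq₀ (norm_nonneg _) hr,
    norm_smul_rotatedNormal_add_smul_rotatedBinormal_sq _ _ (h.unitN s hs) (h.unitB s hs)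
      (h.orthoNB s hs), hAB]

end FramedCurveOn

theorem wong_spherical_characterization_general (γ T N B : ℝ → EuclideanSpace ℝ (Fin 3))
    (κ τ : ℝ → ℝ) (I : Set ℝ) (hIopen : IsOpen I) (hIint : I.OrdConnected)
    (h0 : (0 : ℝ) ∈ I) (h : FramedCurveOn γ T N B κ τ I)
    (r : ℝ) (hr : 0 < r) :
    (∃ c : EuclideanSpace ℝ (Fin 3), ∀ s ∈ I, ‖γ s - c‖ = r) ↔
      (∃ A₀ B₀ : ℝ, A₀ ^ 2 + B₀ ^ 2 = r ^ 2 ∧ ∀ s ∈ I,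
        (A₀ * Real.cos (∫ σ in (0 : ℝ)..s, τ σ) +
          B₀ * Real.sin (∫ σ in (0 : ℝ)..s, τ σ)) * κ s = 1) := by
  have hθ : ∀ s ∈ I, HasDerivWithinAt (fun s => ∫ σ in (0 : ℝ)..s, τ σ) (τ s) I s :=
    fun s hs => (h.contτ.hasDerivAt_intervalIntegral hIopen hIint h0 hs).hasDerivWithinAt
  constructor
  · rintro ⟨c, hc⟩
    exact h.exists_sq_add_sq_eq_of_norm_sub_eq hIopen hIint.convex ⟨0, h0⟩ hθ hc
  · rintro ⟨A₀, B₀, hAB, hκ⟩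
    exact h.exists_norm_sub_eq_of_sq_add_sq_eq hIint.convex ⟨0, h0⟩ hθ hr.le hAB hκ

/-- Breuer–Gottlieb–Wong characterization of spherical curves: a C⁴ framed curve with
nonvanishing curvature, defined on an (open) interval containing `0`, lies on a sphere of
radius `r` iff there are constants `A₀`, `B₀` with `A₀² + B₀² = r²` such that
`(A₀·cos ∫₀ˢτ + B₀·sin ∫₀ˢτ)·κ(s) = 1` for all `s`. -/
theorem wong_spherical_characterization (γ T N B : ℝ → EuclideanSpace ℝ (Fin 3))
    (κ τ : ℝ → ℝ) (I : Set ℝ) (hIopen : IsOpen I) (hIint : I.OrdConnected)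
    (h0 : (0 : ℝ) ∈ I) (h : FramedCurveOn γ T N B κ τ I)
    (hγC4 : ContDiffOn ℝ 4 γ I) (hκ0 : ∀ s ∈ I, κ s ≠ 0)
    (r : ℝ) (hr : 0 < r) :
    (∃ c : EuclideanSpace ℝ (Fin 3), ∀ s ∈ I, ‖γ s - c‖ = r) ↔
      (∃ A₀ B₀ : ℝ, A₀ ^ 2 + B₀ ^ 2 = r ^ 2 ∧ ∀ s ∈ I,
        (A₀ * Real.cos (∫ σ in (0 : ℝ)..s, τ σ) +
          B₀ * Real.sin (∫ σ in (0 : ℝ)..s, τ σ)) * κ s = 1) :=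
  wong_spherical_characterization_general γ T N B κ τ I hIopen hIint h0 h r hr
end

section
/- Let (γ, T, N, B, κ, τ) be a framed curve in ℝ³ parametrized by arclength, defined on an interval I, whose torsion is a nonzero constant τ, and which lies on the unit sphere: there exists c ∈ ℝ³ with ‖γ(s) − c‖ = 1 for all s ∈ I. Then there exists s₀ ∈ ℝ such that κ(s)·cos(τ·(s − s₀)) = 1 for all s ∈ I; in particular, after translating the arclength parameter so that s₀ = 0, the curvature is κ(s) = sec(τ·s). -/
open scoped RealInnerProductSpace

/-! With `x = γ - c`, differentiating `‖x‖² = 1` gives `⟪x, T⟫ = 0`, and differentiating once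
more gives `1 + κ ⟪x, N⟫ = 0`. The remaining coordinates `(-⟪x, N⟫, ⟪x, B⟫)` of `x` lie on the
unit circle and, by the Frenet equations, rotate at the constant angular speed `τ₀`; hence
`-⟪x, N⟫ = cos (τ₀ (s - s₀))` for some phase `s₀`. -/

open Filter Topology

theorem Orthonormal.sum_sq_inner_left {ι E : Type*} [Fintype ι] [NormedAddCommGroup E]
    [InnerProductSpace ℝ E] [FiniteDimensional ℝ E] {v : ι → E} (hv : Orthonormal ℝ v)
    (hcard : Fintype.card ι = Module.finrank ℝ E) (x : E) :
    ∑ i, ⟪x, v i⟫ ^ 2 = ‖x‖ ^ 2 := by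
  have hspan := hv.linearIndependent.span_eq_top_of_card_eq_finrank' hcard
  simpa using (OrthonormalBasis.mk hv hspan.ge).sum_sq_inner_left x

theorem HasDerivAt.eq_zero_of_eventuallyEq_const_s6 {F : Type*} [NormedAddCommGroup F]
    [NormedSpace ℝ F] {f : ℝ → F} {f' C : F} {s : ℝ} (hf : HasDerivAt f f' s)
    (hC : f =ᶠ[𝓝 s] fun _ => C) : f' = 0 :=
  hf.unique ((hasDerivAt_const s C).congr_of_eventuallyEq hC)

theorem HasDerivAt.inner_eq_zero_of_norm_eventuallyEq_const {F : Type*} [NormedAddCommGroup F]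
    [InnerProductSpace ℝ F] {x : ℝ → F} {x' : F} {s r : ℝ} (hx : HasDerivAt x x' s)
    (hr : (‖x ·‖) =ᶠ[𝓝 s] fun _ => r) : ⟪x s, x'⟫ = 0 := by
  have := hx.norm_sq.eq_zero_of_eventuallyEq_const_s6 (hr.fun_comp (· ^ 2))
  simpa using this

section Rotation

variable {I : Set ℝ} {ω : ℝ} {u w : ℝ → ℝ}

theorem sq_add_sq_eq_of_hasDerivAt_rotation (hIopen : IsOpen I) (hI : IsPreconnected I)
    (hu : ∀ s ∈ I, HasDerivAt u (-ω * w s) s) (hw : ∀ s ∈ I, HasDerivAt w (ω * u s) s)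
    {s t : ℝ} (hs : s ∈ I) (ht : t ∈ I) : u s ^ 2 + w s ^ 2 = u t ^ 2 + w t ^ 2 := by
  have hE : ∀ r ∈ I, HasDerivAt (fun r => u r ^ 2 + w r ^ 2) 0 r := fun r hr =>
    (((hu r hr).pow 2).add ((hw r hr).pow 2)).congr_deriv (by ring)
  exact hIopen.is_const_of_deriv_eq_zero hI
    (fun r hr => (hE r hr).differentiableAt.differentiableWithinAt) (fun r hr => (hE r hr).deriv)
    hs ht

theorem eqOn_cos_of_hasDerivAt_rotation (hIopen : IsOpen I) (hI : IsPreconnected I)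
    (hu : ∀ s ∈ I, HasDerivAt u (-ω * w s) s) (hw : ∀ s ∈ I, HasDerivAt w (ω * u s) s)
    {t s₀ : ℝ} (ht : t ∈ I) (hut : u t = Real.cos (ω * (t - s₀)))
    (hwt : w t = Real.sin (ω * (t - s₀))) :
    ∀ s ∈ I, u s = Real.cos (ω * (s - s₀)) := by
  have hphase : ∀ s, HasDerivAt (fun s => ω * (s - s₀)) ω s := fun s => by
    simpa using ((hasDerivAt_id s).sub_const s₀).const_mul ω
  have hdu : ∀ s ∈ I, HasDerivAt (fun s => u s - Real.cos (ω * (s - s₀)))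
      (-ω * (w s - Real.sin (ω * (s - s₀)))) s := fun s hs =>
    ((hu s hs).sub (hphase s).cos).congr_deriv (by ring)
  have hdw : ∀ s ∈ I, HasDerivAt (fun s => w s - Real.sin (ω * (s - s₀)))
      (ω * (u s - Real.cos (ω * (s - s₀)))) s := fun s hs =>
    ((hw s hs).sub (hphase s).sin).congr_deriv (by ring)
  intro s hs
  -- the error is again a solution, and it vanishes at `t`
  have := sq_add_sq_eq_of_hasDerivAt_rotation hIopen hI hdu hdw hs ht
  rw [hut, hwt, sub_self, sub_self] at this
  nlinarith [sq_nonneg (u s - Real.cos (ω * (s - s₀))), sq_nonneg (w s - Real.sin (ω * (s - s₀)))]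

theorem exists_cos_sin_eq_of_sq_add_sq_eq_one {a b : ℝ} (hab : a ^ 2 + b ^ 2 = 1) (hω : ω ≠ 0)
    (t : ℝ) : ∃ s₀, Real.cos (ω * (t - s₀)) = a ∧ Real.sin (ω * (t - s₀)) = b := by
  obtain ⟨θ, hθ⟩ := (Complex.norm_eq_one_iff ⟨a, b⟩).1 (by
    rw [Complex.norm_def, Complex.normSq_mk, Real.sqrt_eq_one]; linear_combination hab)
  refine ⟨t - θ / ω, ?_⟩
  rw [show ω * (t - (t - θ / ω)) = θ by field_simp; ring, ← Complex.exp_ofReal_mul_I_re,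
    ← Complex.exp_ofReal_mul_I_im, hθ]
  exact ⟨rfl, rfl⟩

theorem exists_eqOn_cos_of_hasDerivAt_rotation (hIopen : IsOpen I) (hI : IsPreconnected I)
    (hω : ω ≠ 0) (hu : ∀ s ∈ I, HasDerivAt u (-ω * w s) s)
    (hw : ∀ s ∈ I, HasDerivAt w (ω * u s) s) {t : ℝ} (ht : t ∈ I)
    (hunit : u t ^ 2 + w t ^ 2 = 1) :
    ∃ s₀, ∀ s ∈ I, u s = Real.cos (ω * (s - s₀)) := by
  obtain ⟨s₀, hcos, hsin⟩ := exists_cos_sin_eq_of_sq_add_sq_eq_one hunit hω t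
  exact ⟨s₀, eqOn_cos_of_hasDerivAt_rotation hIopen hI hu hw ht hcos.symm hsin.symm⟩

end Rotation

namespace FramedCurveOn

variable {γ T N B : ℝ → EuclideanSpace ℝ (Fin 3)} {κ τ : ℝ → ℝ} {I : Set ℝ} {s : ℝ}
  {c : EuclideanSpace ℝ (Fin 3)}

theorem orthonormal (h : FramedCurveOn γ T N B κ τ I) (hs : s ∈ I) :
    Orthonormal ℝ ![T s, N s, B s] := by
  refine ⟨fun i => by fin_cases i <;> simp [h.unitT s hs, h.unitN s hs, h.unitB s hs],
    fun i j hij => ?_⟩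
  fin_cases i <;> fin_cases j <;> simp_all [h.orthoTN s hs, h.orthoTB s hs, h.orthoNB s hs,
    real_inner_comm (T s), real_inner_comm (N s)]

theorem sq_inner_add_sq_inner_add_sq_inner (h : FramedCurveOn γ T N B κ τ I) (hs : s ∈ I)
    (x : EuclideanSpace ℝ (Fin 3)) :
    ⟪x, T s⟫ ^ 2 + ⟪x, N s⟫ ^ 2 + ⟪x, B s⟫ ^ 2 = ‖x‖ ^ 2 := by
  simpa [Fin.sum_univ_three, add_assoc] using
    (h.orthonormal hs).sum_sq_inner_left (by simp) x

variable (h : FramedCurveOn γ T N B κ τ I) (hI : IsOpen I)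
include h hI

theorem hasDerivAt_sub_const (hs : s ∈ I) :
    HasDerivAt (fun t => γ t - c) (T s) s :=
  ((h.derivγ s hs).hasDerivAt (hI.mem_nhds hs)).sub_const c

theorem inner_tangent_eq_zero (hsphere : ∀ s ∈ I, ‖γ s - c‖ = 1) (hs : s ∈ I) :
    ⟪γ s - c, T s⟫ = 0 :=
  (h.hasDerivAt_sub_const hI hs).inner_eq_zero_of_norm_eventuallyEq_const
    (eventually_of_mem (hI.mem_nhds hs) hsphere)

theorem sq_inner_normal_add_sq_inner_binormal (hsphere : ∀ s ∈ I, ‖γ s - c‖ = 1) (hs : s ∈ I) :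
    ⟪γ s - c, N s⟫ ^ 2 + ⟪γ s - c, B s⟫ ^ 2 = 1 := by
  have := h.sq_inner_add_sq_inner_add_sq_inner hs (γ s - c)
  rw [h.inner_tangent_eq_zero hI hsphere hs, hsphere s hs] at this
  linarith

theorem curvature_mul_inner_normal (hsphere : ∀ s ∈ I, ‖γ s - c‖ = 1) (hs : s ∈ I) :
    κ s * ⟪γ s - c, N s⟫ = -1 := by
  have hzero := ((h.hasDerivAt_sub_const hI hs).inner ℝ
    ((h.derivT s hs).hasDerivAt (hI.mem_nhds hs))).eq_zero_of_eventuallyEq_const_s6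
    (eventually_of_mem (hI.mem_nhds hs) fun t ht => h.inner_tangent_eq_zero hI hsphere ht)
  rw [real_inner_smul_right, real_inner_self_eq_norm_sq, h.unitT s hs] at hzero
  linarith

theorem hasDerivAt_inner_normal (hsphere : ∀ s ∈ I, ‖γ s - c‖ = 1) (hs : s ∈ I) :
    HasDerivAt (fun t => ⟪γ t - c, N t⟫) (τ s * ⟪γ s - c, B s⟫) s := by
  refine ((h.hasDerivAt_sub_const hI hs).inner ℝ
    ((h.derivN s hs).hasDerivAt (hI.mem_nhds hs))).congr_deriv ?_
  rw [inner_add_right, real_inner_smul_right, real_inner_smul_right,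
    h.inner_tangent_eq_zero hI hsphere hs, h.orthoTN s hs]
  ring

theorem hasDerivAt_inner_binormal (hs : s ∈ I) :
    HasDerivAt (fun t => ⟪γ t - c, B t⟫) (-(τ s * ⟪γ s - c, N s⟫)) s := by
  refine ((h.hasDerivAt_sub_const hI hs).inner ℝ
    ((h.derivB s hs).hasDerivAt (hI.mem_nhds hs))).congr_deriv ?_
  rw [real_inner_smul_right, h.orthoTB s hs]
  ring

end FramedCurveOn

/-- A framed curve of nonzero constant torsion `τ₀` on the unit sphere, defined on an
(open) interval, has curvature `κ(s) = sec(τ₀·(s − s₀))` for some `s₀`, i.e.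
`κ(s)·cos(τ₀·(s − s₀)) = 1`. -/
theorem spherical_constant_torsion_curvature (γ T N B : ℝ → EuclideanSpace ℝ (Fin 3))
    (κ τ : ℝ → ℝ) (I : Set ℝ) (hIopen : IsOpen I) (hIint : I.OrdConnected)
    (h : FramedCurveOn γ T N B κ τ I)
    (τ₀ : ℝ) (hτ₀ : τ₀ ≠ 0) (hτ : ∀ s ∈ I, τ s = τ₀)
    (c : EuclideanSpace ℝ (Fin 3)) (hsphere : ∀ s ∈ I, ‖γ s - c‖ = 1) :
    ∃ s₀ : ℝ, ∀ s ∈ I, κ s * Real.cos (τ₀ * (s - s₀)) = 1 := by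
  rcases I.eq_empty_or_nonempty with rfl | ⟨t, ht⟩
  · exact ⟨0, fun s hs => hs.elim⟩
  obtain ⟨s₀, hs₀⟩ := exists_eqOn_cos_of_hasDerivAt_rotation hIopen hIint.isPreconnected hτ₀
    (u := fun s => -⟪γ s - c, N s⟫) (w := fun s => ⟪γ s - c, B s⟫)
    (fun s hs => (h.hasDerivAt_inner_normal hIopen hsphere hs).neg.congr_deriv
      (by rw [hτ s hs]; ring))
    (fun s hs => (h.hasDerivAt_inner_binormal hIopen hs).congr_deriv (by rw [hτ s hs]; ring))
    ht (by rw [neg_sq]; exact h.sq_inner_normal_add_sq_inner_binormal hIopen hsphere ht)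
  refine ⟨s₀, fun s hs => ?_⟩
  rw [← hs₀ s hs]
  linarith [h.curvature_mul_inner_normal hIopen hsphere hs]
end

section
/- Let (γ, T, N, B, κ, τ) be a framed curve in ℝ³ parametrized by arclength, defined on the closed interval [0, L] with L > 0, whose torsion is a nonzero constant τ, and which lies on the unit sphere (there exists c ∈ ℝ³ with ‖γ(s) − c‖ = 1 for all s ∈ [0, L]). Then L < π/|τ|. -/
open scoped RealInnerProductSpace

/-!
Put `p = γ - c`. Differentiating `‖p‖² = 1` gives `⟪p, T⟫ = 0`, and differentiating again gives
`κ ⟪p, N⟫ = -1`, so `⟪p, N⟫` never vanishes. By the Frenet equations with constant torsion `τ₀`,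
the pair `(⟪p, N⟫, ⟪p, B⟫)` rotates with angular speed `τ₀`, so `⟪p, N⟫` is a sinusoid of
frequency `τ₀`; such a function has a zero on every closed interval of length `π / |τ₀|`.
-/

open Real Set

theorem UniqueDiffWithinAt.hasDerivWithinAt_eq_zero_of_eqOn_const {E : Type*}
    [NormedAddCommGroup E] [NormedSpace ℝ E] {f : ℝ → E} {f' C : E} {I : Set ℝ} {s : ℝ}
    (hI : UniqueDiffWithinAt ℝ I s) (hs : s ∈ I) (hf : HasDerivWithinAt f f' I s)
    (hC : ∀ t ∈ I, f t = C) : f' = 0 :=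
  hI.eq_deriv I hf ((hasDerivWithinAt_const s I C).congr hC (hC s hs))

theorem constant_of_hasDerivWithinAt_Icc_zero {E : Type*} [NormedAddCommGroup E]
    [NormedSpace ℝ E] {f : ℝ → E} {a b : ℝ}
    (hf : ∀ s ∈ Icc a b, HasDerivWithinAt f 0 (Icc a b) s) : ∀ s ∈ Icc a b, f s = f a :=
  constant_of_has_deriv_right_zero (fun s hs => (hf s hs).continuousWithinAt)
    fun s hs => (hf s (Ico_subset_Icc_self hs)).mono_of_mem_nhdsWithin (Icc_mem_nhdsGE_of_mem hs)

theorem eq_mul_cos_add_mul_sin_of_hasDerivWithinAt {f g : ℝ → ℝ} {ω a b : ℝ}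
    (hf : ∀ s ∈ Icc a b, HasDerivWithinAt f (ω * g s) (Icc a b) s)
    (hg : ∀ s ∈ Icc a b, HasDerivWithinAt g (-ω * f s) (Icc a b) s) :
    ∀ s ∈ Icc a b, f s = f a * cos (ω * (s - a)) + g a * sin (ω * (s - a)) := by
  have hθ (s : ℝ) : HasDerivAt (fun t => ω * (t - a)) ω s := by
    simpa using ((hasDerivAt_id s).sub_const a).const_mul ω
  -- Rotating `(f, g)` back through the angle `ω (s - a)` gives a constant vector.
  have hu := constant_of_hasDerivWithinAt_Icc_zero (f := fun s =>
      f s * cos (ω * (s - a)) - g s * sin (ω * (s - a))) fun s hs =>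
    (((hf s hs).mul (hθ s).cos.hasDerivWithinAt).sub
      ((hg s hs).mul (hθ s).sin.hasDerivWithinAt)).congr_deriv (by ring)
  have hv := constant_of_hasDerivWithinAt_Icc_zero (f := fun s =>
      f s * sin (ω * (s - a)) + g s * cos (ω * (s - a))) fun s hs =>
    (((hf s hs).mul (hθ s).sin.hasDerivWithinAt).add
      ((hg s hs).mul (hθ s).cos.hasDerivWithinAt)).congr_deriv (by ring)
  intro s hs
  have hfa := hu s hs
  have hga := hv s hs
  simp only [sub_self, mul_zero, cos_zero, sin_zero, mul_one, sub_zero, zero_add] at hfa hga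
  rw [← hfa, ← hga]
  linear_combination -f s * sin_sq_add_cos_sq (ω * (s - a))

theorem cos_mul_pi_div_abs {ω : ℝ} (hω : ω ≠ 0) : cos (ω * (π / |ω|)) = -1 := by
  rw [← cos_abs, abs_mul, abs_div, abs_of_pos pi_pos, abs_abs,
    mul_div_cancel₀ π (abs_ne_zero.mpr hω), cos_pi]

theorem sin_mul_pi_div_abs {ω : ℝ} (hω : ω ≠ 0) : sin (ω * (π / |ω|)) = 0 := by
  have := sin_sq_add_cos_sq (ω * (π / |ω|))
  rw [cos_mul_pi_div_abs hω] at this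
  exact pow_eq_zero_iff two_ne_zero |>.mp (by linarith)

theorem exists_mem_Icc_mul_cos_add_mul_sin_eq_zero (A B : ℝ) {ω : ℝ} (hω : ω ≠ 0) :
    ∃ x ∈ Icc 0 (π / |ω|), A * cos (ω * x) + B * sin (ω * x) = 0 := by
  have hpos : 0 ≤ π / |ω| := div_nonneg pi_pos.le (abs_nonneg ω)
  have hend : A * cos (ω * (π / |ω|)) + B * sin (ω * (π / |ω|)) = -A := by
    rw [cos_mul_pi_div_abs hω, sin_mul_pi_div_abs hω]; ring
  have hcont : ContinuousOn (fun x => A * cos (ω * x) + B * sin (ω * x)) (Icc 0 (π / |ω|)) := by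
    fun_prop
  rcases le_total A 0 with hA | hA
  · apply intermediate_value_Icc hpos hcont
    simp only [mul_zero, cos_zero, sin_zero, mul_one, add_zero, hend]
    exact ⟨hA, by linarith⟩
  · apply intermediate_value_Icc' hpos hcont
    simp only [mul_zero, cos_zero, sin_zero, mul_one, add_zero, hend]
    exact ⟨by linarith, hA⟩

namespace FramedCurveOn

variable {γ T N B : ℝ → EuclideanSpace ℝ (Fin 3)} {κ τ : ℝ → ℝ} {I : Set ℝ}
  {c : EuclideanSpace ℝ (Fin 3)} {r s : ℝ}

theorem hasDerivWithinAt_inner_tangent (h : FramedCurveOn γ T N B κ τ I) (hs : s ∈ I) :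
    HasDerivWithinAt (fun t => ⟪γ t - c, T t⟫) (κ s * ⟪γ s - c, N s⟫ + 1) I s := by
  refine (((h.derivγ s hs).sub_const c).inner ℝ (h.derivT s hs)).congr_deriv ?_
  rw [real_inner_smul_right, real_inner_self_eq_norm_sq, h.unitT s hs, one_pow]

theorem hasDerivWithinAt_inner_normal (h : FramedCurveOn γ T N B κ τ I) (hs : s ∈ I) :
    HasDerivWithinAt (fun t => ⟪γ t - c, N t⟫)
      (τ s * ⟪γ s - c, B s⟫ - κ s * ⟪γ s - c, T s⟫) I s := by
  refine (((h.derivγ s hs).sub_const c).inner ℝ (h.derivN s hs)).congr_deriv ?_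
  rw [inner_add_right, real_inner_smul_right, real_inner_smul_right, h.orthoTN s hs]
  ring

theorem hasDerivWithinAt_inner_binormal (h : FramedCurveOn γ T N B κ τ I) (hs : s ∈ I) :
    HasDerivWithinAt (fun t => ⟪γ t - c, B t⟫) (-τ s * ⟪γ s - c, N s⟫) I s := by
  refine (((h.derivγ s hs).sub_const c).inner ℝ (h.derivB s hs)).congr_deriv ?_
  rw [real_inner_smul_right, h.orthoTB s hs, add_zero]

theorem inner_tangent_eq_zero_of_sphere (h : FramedCurveOn γ T N B κ τ I)
    (hI : UniqueDiffOn ℝ I) (hsphere : ∀ s ∈ I, ‖γ s - c‖ = r) (hs : s ∈ I) :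
    ⟪γ s - c, T s⟫ = 0 := by
  have hd := ((h.derivγ s hs).sub_const c).inner ℝ ((h.derivγ s hs).sub_const c)
  have := (hI s hs).hasDerivWithinAt_eq_zero_of_eqOn_const hs hd (C := r ^ 2) fun t ht => by
    rw [real_inner_self_eq_norm_sq, hsphere t ht]
  rw [real_inner_comm (γ s - c)] at this
  linarith

theorem curvature_mul_inner_normal_of_sphere (h : FramedCurveOn γ T N B κ τ I)
    (hI : UniqueDiffOn ℝ I) (hsphere : ∀ s ∈ I, ‖γ s - c‖ = r) (hs : s ∈ I) :
    κ s * ⟪γ s - c, N s⟫ = -1 := by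
  have := (hI s hs).hasDerivWithinAt_eq_zero_of_eqOn_const hs
    (h.hasDerivWithinAt_inner_tangent hs) (C := 0) fun t ht =>
      h.inner_tangent_eq_zero_of_sphere hI hsphere ht
  linarith

end FramedCurveOn

/-- A framed curve of nonzero constant torsion `τ₀` on the unit sphere, defined on the
closed interval `[0, L]` with `L > 0`, has arclength `L < π/|τ₀|`. -/
theorem spherical_constant_torsion_length_bound (γ T N B : ℝ → EuclideanSpace ℝ (Fin 3))
    (κ τ : ℝ → ℝ) (L : ℝ) (hL : 0 < L)
    (h : FramedCurveOn γ T N B κ τ (Set.Icc 0 L))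
    (τ₀ : ℝ) (hτ₀ : τ₀ ≠ 0) (hτ : ∀ s ∈ Set.Icc (0 : ℝ) L, τ s = τ₀)
    (c : EuclideanSpace ℝ (Fin 3)) (hsphere : ∀ s ∈ Set.Icc (0 : ℝ) L, ‖γ s - c‖ = 1) :
    L < Real.pi / |τ₀| := by
  have hI : UniqueDiffOn ℝ (Icc 0 L) := uniqueDiffOn_Icc hL
  have hrot := eq_mul_cos_add_mul_sin_of_hasDerivWithinAt (ω := τ₀)
    (fun s hs => by
      simpa [hτ s hs, h.inner_tangent_eq_zero_of_sphere hI hsphere hs] using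
        h.hasDerivWithinAt_inner_normal (c := c) hs)
    (fun s hs => by simpa [hτ s hs] using h.hasDerivWithinAt_inner_binormal (c := c) hs)
  by_contra! hlong
  obtain ⟨x, hx, hzero⟩ :=
    exists_mem_Icc_mul_cos_add_mul_sin_eq_zero ⟪γ 0 - c, N 0⟫ ⟪γ 0 - c, B 0⟫ hτ₀
  have hxI : x ∈ Icc 0 L := ⟨hx.1, hx.2.trans hlong⟩
  have := h.curvature_mul_inner_normal_of_sphere hI hsphere hxI
  rw [hrot x hxI, sub_zero, hzero, mul_zero] at this
  norm_num at this
end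

section
/- There is no closed framed curve (γ, T, N, B, κ, τ) in ℝ³ of period L > 0, parametrized by arclength, whose torsion is a nonzero constant and which lies on a sphere (i.e., for which there exist c ∈ ℝ³ and r > 0 with ‖γ(s) − c‖ = r for all s). -/
open scoped RealInnerProductSpace

/-!
On a sphere of centre `c`, differentiating `‖γ - c‖² = r²` twice gives `⟪T, γ - c⟫ = 0` and
`κ ⟪N, γ - c⟫ = -1`; in particular `b = ⟪N, γ - c⟫` never vanishes. With `d = ⟪B, γ - c⟫`, the
Frenet equations give `b' = τ d` and `d' = -τ b`, so for constant `τ ≠ 0` the pair `(b, d)` rotates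
at angular speed `τ` and `b(π / τ) = -b(0)`. By the intermediate value theorem `b` has a zero,
a contradiction.
-/

theorem inner_deriv_sub_eq_zero_of_norm_sub_eq {E : Type*} [NormedAddCommGroup E]
    [InnerProductSpace ℝ E] {γ γ' : ℝ → E} {c : E} {r : ℝ}
    (hγ : ∀ s, HasDerivAt γ (γ' s) s) (hsph : ∀ s, ‖γ s - c‖ = r) (s : ℝ) :
    ⟪γ' s, γ s - c⟫ = 0 := by
  have hγc : HasDerivAt (fun t => γ t - c) (γ' s) s := (hγ s).sub_const c
  have hconst : (fun t => ⟪γ t - c, γ t - c⟫) = fun _ => r ^ 2 := by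
    ext t
    rw [real_inner_self_eq_norm_sq, hsph]
  have hderiv := hγc.inner ℝ hγc
  rw [hconst, real_inner_comm (γ' s)] at hderiv
  linarith [hderiv.unique (hasDerivAt_const s (r ^ 2))]

section Rotation

variable {b d : ℝ → ℝ} {ω : ℝ}

theorem cos_sub_sin_eq_of_hasDerivAt_rotation (hb : ∀ s, HasDerivAt b (ω * d s) s)
    (hd : ∀ s, HasDerivAt d (-(ω * b s)) s) (s : ℝ) :
    b s * Real.cos (ω * s) - d s * Real.sin (ω * s) = b 0 := by
  have hlin (t : ℝ) : HasDerivAt (fun t => ω * t) ω t := by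
    simpa using (hasDerivAt_id t).const_mul ω
  have hderiv (t : ℝ) :
      HasDerivAt (fun t => b t * Real.cos (ω * t) - d t * Real.sin (ω * t)) 0 t :=
    (((hb t).mul (hlin t).cos).sub ((hd t).mul (hlin t).sin)).congr_deriv (by ring)
  simpa using is_const_of_deriv_eq_zero (fun t => (hderiv t).differentiableAt)
    (fun t => (hderiv t).deriv) s 0

theorem exists_eq_zero_of_hasDerivAt_rotation (hω : ω ≠ 0)
    (hb : ∀ s, HasDerivAt b (ω * d s) s) (hd : ∀ s, HasDerivAt d (-(ω * b s)) s) :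
    ∃ s, b s = 0 := by
  have hhalf : b (Real.pi / ω) = -b 0 := by
    have h := cos_sub_sin_eq_of_hasDerivAt_rotation hb hd (Real.pi / ω)
    rw [mul_div_cancel₀ _ hω, Real.cos_pi, Real.sin_pi] at h
    linarith
  have hcont : ContinuousOn b (Set.uIcc 0 (Real.pi / ω)) := fun s _ =>
    (hb s).continuousAt.continuousWithinAt
  have hzero : (0 : ℝ) ∈ Set.uIcc (b 0) (b (Real.pi / ω)) := by
    rw [hhalf, Set.mem_uIcc]
    rcases le_total 0 (b 0) with h | h
    · exact Or.inr ⟨by linarith, h⟩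
    · exact Or.inl ⟨h, by linarith⟩
  obtain ⟨s, -, hs⟩ := intermediate_value_uIcc hcont hzero
  exact ⟨s, hs⟩

end Rotation

namespace FramedCurveOn

variable {γ T N B : ℝ → EuclideanSpace ℝ (Fin 3)} {κ τ : ℝ → ℝ}
  {c : EuclideanSpace ℝ (Fin 3)} {r : ℝ}

theorem hasDerivAt_curve (h : FramedCurveOn γ T N B κ τ Set.univ) (s : ℝ) :
    HasDerivAt γ (T s) s :=
  hasDerivWithinAt_univ.mp (h.derivγ s trivial)

theorem hasDerivAt_tangent (h : FramedCurveOn γ T N B κ τ Set.univ) (s : ℝ) :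
    HasDerivAt T (κ s • N s) s :=
  hasDerivWithinAt_univ.mp (h.derivT s trivial)

theorem hasDerivAt_normal (h : FramedCurveOn γ T N B κ τ Set.univ) (s : ℝ) :
    HasDerivAt N ((-κ s) • T s + τ s • B s) s :=
  hasDerivWithinAt_univ.mp (h.derivN s trivial)

theorem hasDerivAt_binormal (h : FramedCurveOn γ T N B κ τ Set.univ) (s : ℝ) :
    HasDerivAt B ((-τ s) • N s) s :=
  hasDerivWithinAt_univ.mp (h.derivB s trivial)

theorem inner_tangent_sub_center_eq_zero (h : FramedCurveOn γ T N B κ τ Set.univ)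
    (hsph : ∀ s, ‖γ s - c‖ = r) (s : ℝ) : ⟪T s, γ s - c⟫ = 0 :=
  inner_deriv_sub_eq_zero_of_norm_sub_eq h.hasDerivAt_curve hsph s

theorem curvature_mul_inner_normal_sub_center (h : FramedCurveOn γ T N B κ τ Set.univ)
    (hsph : ∀ s, ‖γ s - c‖ = r) (s : ℝ) : κ s * ⟪N s, γ s - c⟫ = -1 := by
  have hderiv := (h.hasDerivAt_tangent s).inner ℝ ((h.hasDerivAt_curve s).sub_const c)
  have hT : ⟪T s, T s⟫ = 1 := by rw [real_inner_self_eq_norm_sq, h.unitT s trivial]; norm_num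
  rw [funext (h.inner_tangent_sub_center_eq_zero hsph), hT, real_inner_smul_left] at hderiv
  linarith [hderiv.unique (hasDerivAt_const s 0)]

theorem hasDerivAt_inner_normal_sub_center (h : FramedCurveOn γ T N B κ τ Set.univ)
    (hsph : ∀ s, ‖γ s - c‖ = r) (s : ℝ) :
    HasDerivAt (fun t => ⟪N t, γ t - c⟫) (τ s * ⟪B s, γ s - c⟫) s := by
  refine ((h.hasDerivAt_normal s).inner ℝ ((h.hasDerivAt_curve s).sub_const c)).congr_deriv ?_
  rw [real_inner_comm (T s) (N s), h.orthoTN s trivial, inner_add_left, real_inner_smul_left,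
    real_inner_smul_left, h.inner_tangent_sub_center_eq_zero hsph]
  ring

theorem hasDerivAt_inner_binormal_sub_center (h : FramedCurveOn γ T N B κ τ Set.univ) (s : ℝ) :
    HasDerivAt (fun t => ⟪B t, γ t - c⟫) (-(τ s * ⟪N s, γ s - c⟫)) s := by
  refine ((h.hasDerivAt_binormal s).inner ℝ ((h.hasDerivAt_curve s).sub_const c)).congr_deriv ?_
  rw [real_inner_comm (T s) (B s), h.orthoTB s trivial, real_inner_smul_left]
  ring

end FramedCurveOn

/-- There is no closed framed curve of nonzero constant torsion lying on a sphere. -/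
theorem no_closed_spherical_curve_of_constant_torsion :
    ¬ ∃ (γ T N B : ℝ → EuclideanSpace ℝ (Fin 3)) (κ τ : ℝ → ℝ) (L τ₀ : ℝ)
        (c : EuclideanSpace ℝ (Fin 3)) (r : ℝ),
      0 < L ∧ ClosedFramedCurve γ T N B κ τ L ∧
        (∀ s, τ s = τ₀) ∧ τ₀ ≠ 0 ∧ 0 < r ∧ (∀ s, ‖γ s - c‖ = r) := by
  rintro ⟨γ, T, N, B, κ, τ, L, τ₀, c, r, -, hC, hτ, hτ₀, -, hsph⟩
  have hF := hC.framed
  obtain ⟨s, hs⟩ := exists_eq_zero_of_hasDerivAt_rotation hτ₀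
    (fun s => hτ s ▸ hF.hasDerivAt_inner_normal_sub_center hsph s)
    (fun s => hτ s ▸ hF.hasDerivAt_inner_binormal_sub_center s)
  have hκ := hF.curvature_mul_inner_normal_sub_center hsph s
  rw [hs, mul_zero] at hκ
  norm_num at hκ
end

section
/- Let L > 0, μ ≥ 0, and τ ∈ ℝ. Suppose φ : ℝ → ℝ is differentiable and L-periodic, f : ℝ → ℝ satisfies |f(s)| ≤ μ/2 for all s and |f(s₀)| < μ/2 for at least one s₀, and φ'(s) = f(s) − τ for all s. Then |τ| < μ/2. -/
/-- Analytic core of the torsion bound for closed curves on compact surfaces: if `φ` is a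
differentiable `L`-periodic function with `φ' = f − τ`, where `|f| ≤ μ/2` everywhere and
`|f(s₀)| < μ/2` somewhere, then `|τ| < μ/2`. -/
theorem torsion_bound_of_periodic_angle (L μ τ : ℝ) (hL : 0 < L) (hμ : 0 ≤ μ)
    (φ f : ℝ → ℝ) (hφ : Differentiable ℝ φ) (hper : Function.Periodic φ L)
    (hf : ∀ s, |f s| ≤ μ / 2) (s₀ : ℝ) (hf₀ : |f s₀| < μ / 2)
    (hode : ∀ s, deriv φ s = f s - τ) :
    |τ| < μ / 2 := by
  by_contra hcon
  push_neg at hcon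
  have hμpos : 0 < μ / 2 := lt_of_le_of_lt (abs_nonneg _) hf₀
  -- show φ is constant near s₀, hence deriv φ s₀ = 0
  have key : ∀ (mono : Monotone φ ∨ Antitone φ), deriv φ s₀ = 0 := by
    intro mono
    have hconst : ∀ x ∈ Set.Icc (s₀ - L) (s₀ + L), φ x = φ s₀ := by
      intro x hx
      have h1 : φ (s₀ + L) = φ s₀ := hper s₀
      have h2 : φ (s₀ - L) = φ s₀ := hper.sub_eq s₀
      rcases mono with hm | hm
      · have a := hm hx.1
        have b := hm hx.2
        rw [h1] at b; rw [h2] at a; linarith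
      · have a := hm hx.1
        have b := hm hx.2
        rw [h1] at b; rw [h2] at a; linarith
    have hev : φ =ᶠ[nhds s₀] fun _ => φ s₀ := by
      filter_upwards [Icc_mem_nhds (show s₀ - L < s₀ by linarith) (show s₀ < s₀ + L by linarith)] with x hx
      exact hconst x hx
    rw [hev.deriv_eq, deriv_const]
  rcases le_or_gt (μ / 2) τ with hτ | hτ
  · -- φ' ≤ 0 everywhere, so φ antitone
    have hanti : Antitone φ := by
      apply antitone_of_deriv_nonpos hφ
      intro x
      rw [hode x]
      have := (abs_le.mp (hf x)).2
      linarith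
    have h0 := key (Or.inr hanti)
    rw [hode s₀] at h0
    have := (abs_lt.mp hf₀).2
    linarith
  · have hτ' : τ ≤ -(μ / 2) := by
      rcases abs_cases τ with ⟨h, _⟩ | ⟨h, _⟩ <;> rw [h] at hcon <;> linarith
    have hmono : Monotone φ := by
      apply monotone_of_deriv_nonneg hφ
      intro x
      rw [hode x]
      have := (abs_le.mp (hf x)).1
      linarith
    have h0 := key (Or.inl hmono)
    rw [hode s₀] at h0
    have := (abs_lt.mp hf₀).1
    linarith
end

section
/- Let a > 0 and b = a/√2, and define the plane curve ρ(t) = (x(t), y(t)) = (a·cos t + b·cos 2t, a·sin t − b·sin 2t). Then ρ is regular (x'(t)² + y'(t)² > 0 for all t) and the signed curvature numerator x'(t)·y''(t) − y'(t)·x''(t) = a²·(√2·cos 3t − 3) is strictly negative for all t; in particular, the curvature of ρ never vanishes. -/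
/-!
Both coordinates of `ρ` lie in the span of `cos t, cos 2t, sin t, sin 2t`, which is closed under
differentiation, so the speed and the curvature numerator are explicit. Via
`cos t cos 2t − sin t sin 2t = cos 3t` they become `a² + 4b² − 4ab cos 3t ≥ (|a| − 2|b|)²` and
`a² − 8b² + 2ab cos 3t`. For `b = a/√2` the first is `a²(3 − 2√2 cos 3t) > 0` and the second is
`a²(√2 cos 3t − 3) ≤ a²(√2 − 3) < 0`.
-/

open Real

noncomputable section

def cosSum (A B t : ℝ) : ℝ := A * cos t + B * cos (2 * t)

def sinSum (A B t : ℝ) : ℝ := A * sin t + B * sin (2 * t)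

theorem hasDerivAt_cosSum (A B t : ℝ) :
    HasDerivAt (cosSum A B) (sinSum (-A) (-(2 * B)) t) t :=
  (((hasDerivAt_cos t).const_mul A).add
    (((hasDerivAt_id t).const_mul 2).cos.const_mul B)).congr_deriv
    (by simp only [sinSum, id]; ring)

theorem hasDerivAt_sinSum (A B t : ℝ) :
    HasDerivAt (sinSum A B) (cosSum A (2 * B) t) t :=
  (((hasDerivAt_sin t).const_mul A).add
    (((hasDerivAt_id t).const_mul 2).sin.const_mul B)).congr_deriv
    (by simp only [cosSum, id]; ring)

theorem deriv_cosSum (A B : ℝ) : deriv (cosSum A B) = sinSum (-A) (-(2 * B)) :=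
  funext fun t => (hasDerivAt_cosSum A B t).deriv

theorem deriv_sinSum (A B : ℝ) : deriv (sinSum A B) = cosSum A (2 * B) :=
  funext fun t => (hasDerivAt_sinSum A B t).deriv

section Epicycle

variable (a b t : ℝ)

theorem cos_three_mul_eq_cos_mul_cos_two_mul_sub :
    cos (3 * t) = cos t * cos (2 * t) - sin t * sin (2 * t) := by
  rw [← cos_add]
  ring_nf

theorem epicycle_speed_sq :
    deriv (cosSum a b) t ^ 2 + deriv (sinSum a (-b)) t ^ 2
      = a ^ 2 + 4 * b ^ 2 - 4 * a * b * cos (3 * t) := by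
  simp only [deriv_cosSum, deriv_sinSum, cosSum, sinSum]
  linear_combination a ^ 2 * sin_sq_add_cos_sq t + 4 * b ^ 2 * sin_sq_add_cos_sq (2 * t)
    + 4 * a * b * cos_three_mul_eq_cos_mul_cos_two_mul_sub t

theorem epicycle_curvature_numerator :
    deriv (cosSum a b) t * deriv (deriv (sinSum a (-b))) t
        - deriv (sinSum a (-b)) t * deriv (deriv (cosSum a b)) t
      = a ^ 2 - 8 * b ^ 2 + 2 * a * b * cos (3 * t) := by
  simp only [deriv_cosSum, deriv_sinSum, cosSum, sinSum]
  linear_combination a ^ 2 * sin_sq_add_cos_sq t - 8 * b ^ 2 * sin_sq_add_cos_sq (2 * t)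
    - 2 * a * b * cos_three_mul_eq_cos_mul_cos_two_mul_sub t

theorem epicycle_speed_sq_pos {a b : ℝ} (hab : |a| ≠ 2 * |b|) (t : ℝ) :
    0 < deriv (cosSum a b) t ^ 2 + deriv (sinSum a (-b)) t ^ 2 := by
  have hcos : a * b * cos (3 * t) ≤ |a| * |b| := by
    calc a * b * cos (3 * t) ≤ |a * b * cos (3 * t)| := le_abs_self _
      _ = |a| * |b| * |cos (3 * t)| := by rw [abs_mul, abs_mul]
      _ ≤ |a| * |b| := mul_le_of_le_one_right (by positivity) (abs_cos_le_one _)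
  have hgap : 0 < (|a| - 2 * |b|) ^ 2 := by
    have := sub_ne_zero.mpr hab
    positivity
  rw [epicycle_speed_sq]
  nlinarith [sq_abs a, sq_abs b]

end Epicycle

end

/-- For `a > 0` and `b = a/√2`, the planar epicycle
`ρ(t) = (a·cos t + b·cos 2t, a·sin t − b·sin 2t)` is regular and its signed-curvature
numerator is `x'·y'' − y'·x'' = a²·(√2·cos 3t − 3) < 0` for all `t`; in particular the
curvature of `ρ` never vanishes. -/
theorem planar_epicycle_nonvanishing_curvature (a b : ℝ) (ha : 0 < a)
    (hb : b = a / Real.sqrt 2) (x y : ℝ → ℝ)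
    (hx : ∀ t, x t = a * Real.cos t + b * Real.cos (2 * t))
    (hy : ∀ t, y t = a * Real.sin t - b * Real.sin (2 * t)) :
    ∀ t : ℝ,
      0 < (deriv x t) ^ 2 + (deriv y t) ^ 2 ∧
      deriv x t * deriv (deriv y) t - deriv y t * deriv (deriv x) t =
        a ^ 2 * (Real.sqrt 2 * Real.cos (3 * t) - 3) ∧
      a ^ 2 * (Real.sqrt 2 * Real.cos (3 * t) - 3) < 0 := by
  obtain rfl : x = cosSum a b := funext hx
  obtain rfl : y = sinSum a (-b) := funext fun t => by rw [hy, sinSum]; ring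
  have hsqrt : sqrt 2 ^ 2 = 2 := sq_sqrt zero_le_two
  have hsqrt_lt : sqrt 2 < 3 / 2 := by nlinarith [sqrt_nonneg 2]
  have hb_sq : 2 * b ^ 2 = a ^ 2 := by
    rw [hb, div_pow, hsqrt]; ring
  have hab : 2 * a * b = sqrt 2 * a ^ 2 := by
    rw [hb]; field_simp; exact hsqrt.symm
  intro t
  refine ⟨epicycle_speed_sq_pos ?_ t, ?_, ?_⟩
  · have hb_pos : 0 < b := by rw [hb]; positivity
    rw [abs_of_pos ha, abs_of_pos hb_pos]
    nlinarith
  · rw [epicycle_curvature_numerator]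
    linear_combination -4 * hb_sq + cos (3 * t) * hab
  · have hcos : sqrt 2 * cos (3 * t) ≤ sqrt 2 :=
      mul_le_of_le_one_right (sqrt_nonneg 2) (cos_le_one _)
    exact mul_neg_of_pos_of_neg (by positivity) (by linarith)
end
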